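/- arXiv:0909.2428 — 6 statements merged into one kernel-verified Lean document; each statement's English description precedes it below -/
import Mathlib

section
/- Let f : ℝ → ℝ be twice differentiable with f''(u) = -2 f(u)^3 for all u ∈ ℝ. Let λ > 0, μ ∈ ℝ, θ ∈ ℝ, and let p = (p₀,p₁,p₂,p₃) ∈ ℝ⁴ satisfy the dispersion relation p₀² - p₁² - p₂² - p₃² = μ² √(λ/2). Then the function φ : ℝ⁴ → ℝ defined by φ(x₀,x₁,x₂,x₃) = μ (2/λ)^{1/4} f(p₀x₀ - p₁x₁ - p₂x₂ - p₃x₃ + θ) satisfies the massless quartic field equation ∂²φ/∂x₀² - ∂²φ/∂x₁² - ∂²φ/∂x₂² - ∂²φ/∂x₃² + λ φ³ = 0 on all of ℝ⁴. -/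
/-! Along a plane wave `φ = C f(p·x + θ)` the d'Alembertian acts as `C (p·p) f''`, so the ODE
`f'' = -2f³` turns `□φ + λφ³` into `C f³ (λC² - 2 p·p)`, and the dispersion relation is exactly
`λC² = 2 p·p` for the amplitude `C = μ (2/λ)^{1/4}`. -/

section AffineReparametrization

variable {𝕜 E : Type*} [NontriviallyNormedField 𝕜] [NormedAddCommGroup E] [NormedSpace 𝕜 E]

-- No differentiability is needed: for `c ≠ 0` the affine map is a diffeomorphism, and for
-- `c = 0` both sides vanish.
theorem deriv_comp_mul_add (f : 𝕜 → E) (c b : 𝕜) :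
    deriv (fun s => f (c * s + b)) = fun s => c • deriv f (c * s + b) := by
  funext s
  exact (deriv_comp_mul_left c (fun y => f (y + b)) s).trans
    (by rw [deriv_comp_add_const])

theorem deriv_deriv_comp_mul_add (f : 𝕜 → E) (c b : 𝕜) :
    deriv (deriv fun s => f (c * s + b)) = fun s => c ^ 2 • deriv (deriv f) (c * s + b) := by
  funext s
  rw [deriv_comp_mul_add]
  change deriv (c • fun s => deriv f (c * s + b)) s = _
  rw [deriv_const_smul_field, deriv_comp_mul_add, smul_smul, sq]

end AffineReparametrization

theorem deriv_deriv_eq_of_eq_const_mul_comp_affine {f g : ℝ → ℝ} {C c w x : ℝ}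
    (hg : ∀ s, g s = C * f (c * (s - x) + w)) :
    deriv (deriv g) x = C * c ^ 2 * deriv (deriv f) w := by
  have hg' : g = fun s => C * f (c * s + (w - c * x)) := by
    funext s
    rw [hg]
    ring_nf
  rw [hg', deriv_const_mul_field', deriv_const_mul_field', deriv_deriv_comp_mul_add]
  simp only [smul_eq_mul, add_sub_cancel]
  ring

theorem Real.rpow_one_div_four_sq {x : ℝ} (hx : 0 ≤ x) : (x ^ ((1 : ℝ) / 4)) ^ 2 = √x := by
  rw [← Real.rpow_natCast, ← Real.rpow_mul hx, Real.sqrt_eq_rpow]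
  norm_num

theorem scalar_field_exact_solution_general
    (f : ℝ → ℝ)
    (hODE : ∀ u : ℝ, deriv (deriv f) u = -2 * f u ^ 3)
    (lam μ θ p₀ p₁ p₂ p₃ : ℝ) (hlam : 0 < lam)
    (hdisp : p₀ ^ 2 - p₁ ^ 2 - p₂ ^ 2 - p₃ ^ 2 = μ ^ 2 * Real.sqrt (lam / 2))
    (φ : ℝ → ℝ → ℝ → ℝ → ℝ)
    (hφ : ∀ x₀ x₁ x₂ x₃ : ℝ, φ x₀ x₁ x₂ x₃ =
      μ * (2 / lam) ^ ((1 : ℝ) / 4) * f (p₀ * x₀ - p₁ * x₁ - p₂ * x₂ - p₃ * x₃ + θ)) :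
    ∀ x₀ x₁ x₂ x₃ : ℝ,
      deriv (fun t => deriv (fun s => φ s x₁ x₂ x₃) t) x₀
      - deriv (fun t => deriv (fun s => φ x₀ s x₂ x₃) t) x₁
      - deriv (fun t => deriv (fun s => φ x₀ x₁ s x₃) t) x₂
      - deriv (fun t => deriv (fun s => φ x₀ x₁ x₂ s) t) x₃
      + lam * φ x₀ x₁ x₂ x₃ ^ 3 = 0 := by
  intro x₀ x₁ x₂ x₃
  set C := μ * (2 / lam) ^ ((1 : ℝ) / 4)
  set w := p₀ * x₀ - p₁ * x₁ - p₂ * x₂ - p₃ * x₃ + θ with hw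
  have h₀ := deriv_deriv_eq_of_eq_const_mul_comp_affine (f := f) (C := C)
    (g := fun s => φ s x₁ x₂ x₃) (c := p₀) (w := w) (x := x₀) fun s => by rw [hφ, hw]; ring_nf
  have h₁ := deriv_deriv_eq_of_eq_const_mul_comp_affine (f := f) (C := C)
    (g := fun s => φ x₀ s x₂ x₃) (c := -p₁) (w := w) (x := x₁) fun s => by rw [hφ, hw]; ring_nf
  have h₂ := deriv_deriv_eq_of_eq_const_mul_comp_affine (f := f) (C := C)
    (g := fun s => φ x₀ x₁ s x₃) (c := -p₂) (w := w) (x := x₂) fun s => by rw [hφ, hw]; ring_nf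
  have h₃ := deriv_deriv_eq_of_eq_const_mul_comp_affine (f := f) (C := C)
    (g := fun s => φ x₀ x₁ x₂ s) (c := -p₃) (w := w) (x := x₃) fun s => by rw [hφ, hw]; ring_nf
  have hamplitude : lam * C ^ 2 = 2 * (μ ^ 2 * √(lam / 2)) := by
    rw [mul_pow, Real.rpow_one_div_four_sq (by positivity), Real.sqrt_div' _ hlam.le,
      Real.sqrt_div' _ (by norm_num : (0 : ℝ) ≤ 2)]
    field_simp
    rw [Real.sq_sqrt hlam.le, Real.sq_sqrt (by norm_num : (0 : ℝ) ≤ 2)]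
    ring
  rw [h₀, h₁, h₂, h₃, hφ, hODE]
  linear_combination (-2 * C * f w ^ 3) * hdisp + (C * f w ^ 3) * hamplitude

/-- An exact travelling-wave solution of the massless quartic field
equation `□φ + λφ³ = 0` built from a solution `f` of `f'' = -2f³`, provided the
dispersion relation `p₀² - p₁² - p₂² - p₃² = μ²√(λ/2)` holds. -/
theorem scalar_field_exact_solution
    (f : ℝ → ℝ) (hf : Differentiable ℝ f) (hf' : Differentiable ℝ (deriv f))
    (hODE : ∀ u : ℝ, deriv (deriv f) u = -2 * f u ^ 3)
    (lam μ θ p₀ p₁ p₂ p₃ : ℝ) (hlam : 0 < lam)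
    (hdisp : p₀ ^ 2 - p₁ ^ 2 - p₂ ^ 2 - p₃ ^ 2 = μ ^ 2 * Real.sqrt (lam / 2))
    (φ : ℝ → ℝ → ℝ → ℝ → ℝ)
    (hφ : ∀ x₀ x₁ x₂ x₃ : ℝ, φ x₀ x₁ x₂ x₃ =
      μ * (2 / lam) ^ ((1 : ℝ) / 4) * f (p₀ * x₀ - p₁ * x₁ - p₂ * x₂ - p₃ * x₃ + θ)) :
    ∀ x₀ x₁ x₂ x₃ : ℝ,
      deriv (fun t => deriv (fun s => φ s x₁ x₂ x₃) t) x₀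
      - deriv (fun t => deriv (fun s => φ x₀ s x₂ x₃) t) x₁
      - deriv (fun t => deriv (fun s => φ x₀ x₁ s x₃) t) x₂
      - deriv (fun t => deriv (fun s => φ x₀ x₁ x₂ s) t) x₃
      + lam * φ x₀ x₁ x₂ x₃ ^ 3 = 0 :=
  scalar_field_exact_solution_general f hODE lam μ θ p₀ p₁ p₂ p₃ hlam hdisp φ hφ
end

section
/- There exists a unique function f : ℝ → ℝ, twice continuously differentiable on all of ℝ, such that f''(u) = -2 f(u)^3 for all u ∈ ℝ, f(0) = 0 and f'(0) = 1. Moreover this solution satisfies |f(u)| ≤ 1 and |f'(u)| ≤ 1 for all u ∈ ℝ. -/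
/-!
With `p = (f, f')` the equation becomes the planar system `p' = snField p`, where
`snField (x, y) = (y, -2x³)`, and this system conserves the energy `x⁴ + y²`. The initial value
`(0, 1)` has energy `1`, so every solution through it stays in the square `|x|, |y| ≤ 1`: this is
the bound, and it also gives uniqueness, as `snField` is Lipschitz on bounded sets. The same
a priori bound lets Picard–Lindelöf, with a step `1/16` independent of the starting point, extend a
solution on `[-c, c]` to `[-c - 1/16, c + 1/16]`; the solutions on all bounded intervals then
patch, by uniqueness, to a global one.
-/

open Set Metric Filter Topology

section Prod

variable {E F : Type*} [NormedAddCommGroup E] [NormedSpace ℝ E] [NormedAddCommGroup F]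
  [NormedSpace ℝ F] {f : ℝ → E × F} {f' : E × F} {s : Set ℝ} {t : ℝ}

theorem HasDerivWithinAt.fst (h : HasDerivWithinAt f f' s t) :
    HasDerivWithinAt (fun u ↦ (f u).1) f'.1 s t :=
  HasFDerivAt.comp_hasDerivWithinAt (l' := ContinuousLinearMap.fst ℝ E F) t hasFDerivAt_fst h

theorem HasDerivWithinAt.snd (h : HasDerivWithinAt f f' s t) :
    HasDerivWithinAt (fun u ↦ (f u).2) f'.2 s t :=
  HasFDerivAt.comp_hasDerivWithinAt (l' := ContinuousLinearMap.snd ℝ E F) t hasFDerivAt_snd h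

theorem HasDerivAt.fst (h : HasDerivAt f f' t) : HasDerivAt (fun u ↦ (f u).1) f'.1 t :=
  HasFDerivAt.comp_hasDerivAt (l' := ContinuousLinearMap.fst ℝ E F) t hasFDerivAt_fst h

theorem HasDerivAt.snd (h : HasDerivAt f f' t) : HasDerivAt (fun u ↦ (f u).2) f'.2 t :=
  HasFDerivAt.comp_hasDerivAt (l' := ContinuousLinearMap.snd ℝ E F) t hasFDerivAt_snd h

end Prod

section IntegralCurve

variable {E : Type*} [NormedAddCommGroup E] [NormedSpace ℝ E] {γ γ' : ℝ → E} {v : ℝ → E → E}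
  {s s' : Set ℝ}

theorem IsIntegralCurveOn.congr (hγ : IsIntegralCurveOn γ v s) (h : EqOn γ' γ s) :
    IsIntegralCurveOn γ' v s := fun t ht ↦ by
  rw [h ht]
  exact (hγ t ht).congr h (h ht)

theorem IsIntegralCurveOn.union (hs : IsClosed s) (hs' : IsClosed s')
    (hγ : IsIntegralCurveOn γ v s) (hγ' : IsIntegralCurveOn γ v s') :
    IsIntegralCurveOn γ v (s ∪ s') := by
  -- off a closed set, a derivative within it is vacuous
  have extend : ∀ {u : Set ℝ}, IsClosed u → IsIntegralCurveOn γ v u →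
      ∀ t, HasDerivWithinAt γ (v t (γ t)) u t := fun {u} hu hγu t ↦ by
    by_cases ht : t ∈ u
    · exact hγu t ht
    · rw [hasDerivWithinAt_iff_hasFDerivWithinAt]
      exact HasFDerivWithinAt.of_notMem_closure (by rwa [hu.closure_eq])
  exact fun t _ ↦ (extend hs hγ t).union (extend hs' hγ' t)

theorem IsIntegralCurve.contDiff_one {w : E → E} (hw : Continuous w)
    (hγ : IsIntegralCurve γ fun _ ↦ w) : ContDiff ℝ 1 γ := by
  have hderiv : deriv γ = w ∘ γ := funext fun t ↦ (hγ t).deriv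
  exact contDiff_one_iff_deriv.mpr ⟨fun t ↦ (hγ t).differentiableAt,
    hderiv ▸ hw.comp hγ.continuous⟩

theorem IsIntegralCurveOn.eqOn_Icc {S : Set E} {K : NNReal} {T : ℝ}
    (hv : ∀ t, LipschitzOnWith K (v t) S) (hT : 0 < T)
    (hγ : IsIntegralCurveOn γ v (Icc (-T) T)) (hγS : MapsTo γ (Icc (-T) T) S)
    (hγ' : IsIntegralCurveOn γ' v (Icc (-T) T)) (hγ'S : MapsTo γ' (Icc (-T) T) S)
    (h0 : γ 0 = γ' 0) : EqOn γ γ' (Icc (-T) T) :=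
  ODE_solution_unique_of_mem_Icc (fun t _ ↦ hv t) ⟨neg_lt_zero.mpr hT, hT⟩ hγ.continuousOn
    (fun _ ht ↦ (hγ.isIntegralCurveAt (Icc_mem_nhds ht.1 ht.2)).hasDerivAt)
    (fun _ ht ↦ hγS (Ioo_subset_Icc_self ht)) hγ'.continuousOn
    (fun _ ht ↦ (hγ'.isIntegralCurveAt (Icc_mem_nhds ht.1 ht.2)).hasDerivAt)
    (fun _ ht ↦ hγ'S (Ioo_subset_Icc_self ht)) h0

theorem exists_isIntegralCurve_of_forall_Icc {S : Set E} {K : NNReal} {x : E}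
    (hv : ∀ t, LipschitzOnWith K (v t) S)
    (hex : ∀ T, ∃ γ, γ 0 = x ∧ IsIntegralCurveOn γ v (Icc (-T) T) ∧ MapsTo γ (Icc (-T) T) S) :
    ∃ γ, γ 0 = x ∧ IsIntegralCurve γ v := by
  choose Γ hΓ0 hΓ hΓS using hex
  have agree : ∀ R > 0, ∀ t, |t| ≤ R → Γ (|t| + 1) t = Γ R t := by
    intro R hR t ht
    set m := min (|t| + 1) R
    have sub : ∀ {T}, m ≤ T → Icc (-m) m ⊆ Icc (-T) T := fun h ↦ Icc_subset_Icc (neg_le_neg h) h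
    have sub_left := sub (min_le_left _ _)
    have sub_right := sub (min_le_right _ _)
    exact IsIntegralCurveOn.eqOn_Icc hv (lt_min (by positivity) hR) ((hΓ _).mono sub_left)
      ((hΓS _).mono_left sub_left) ((hΓ _).mono sub_right) ((hΓS _).mono_left sub_right)
      ((hΓ0 _).trans (hΓ0 _).symm) (abs_le.mp (le_min (lt_add_one _).le ht))
  refine ⟨fun t ↦ Γ (|t| + 1) t, hΓ0 _, fun t ↦ ?_⟩
  have hR : 0 < |t| + 1 := by positivity
  have ht : t ∈ Ioo (-(|t| + 1)) (|t| + 1) := abs_lt.mp (lt_add_one _)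
  have hnhds : Ioo (-(|t| + 1)) (|t| + 1) ∈ 𝓝 t := Ioo_mem_nhds ht.1 ht.2
  have hder := ((hΓ (|t| + 1)).isIntegralCurveAt
    (mem_of_superset hnhds Ioo_subset_Icc_self)).hasDerivAt
  refine hder.congr_of_eventuallyEq ?_
  exact eventually_of_mem hnhds fun s hs ↦ agree _ hR s (abs_le.mpr ⟨hs.1.le, hs.2.le⟩)

end IntegralCurve

noncomputable def snField (p : ℝ × ℝ) : ℝ × ℝ := (p.2, -2 * p.1 ^ 3)

noncomputable def snEnergy (p : ℝ × ℝ) : ℝ := p.1 ^ 4 + p.2 ^ 2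

theorem continuous_snField : Continuous snField := by
  unfold snField
  fun_prop

theorem lipschitzOnWith_snField : LipschitzOnWith 24 snField (closedBall 0 2) := by
  have cube : LipschitzOnWith 24 (fun p : ℝ × ℝ ↦ -2 * p.1 ^ 3) (closedBall 0 2) := by
    refine LipschitzOnWith.of_dist_le_mul fun p hp q hq ↦ ?_
    obtain ⟨hp1, -⟩ := norm_prod_le_iff.mp (mem_closedBall_zero_iff.mp hp)
    obtain ⟨hq1, -⟩ := norm_prod_le_iff.mp (mem_closedBall_zero_iff.mp hq)
    rw [Real.norm_eq_abs, abs_le] at hp1 hq1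
    have factor : |2 * (p.1 ^ 2 + p.1 * q.1 + q.1 ^ 2)| ≤ 24 := by
      rw [abs_le]
      constructor <;> nlinarith [sq_nonneg (p.1 + q.1)]
    calc dist (-2 * p.1 ^ 3) (-2 * q.1 ^ 3)
        = |2 * (p.1 ^ 2 + p.1 * q.1 + q.1 ^ 2)| * dist q.1 p.1 := by
          rw [Real.dist_eq, Real.dist_eq, ← abs_mul]
          ring_nf
      _ ≤ 24 * dist p q := by
          gcongr
          rw [dist_comm, Prod.dist_eq]
          exact le_max_left _ _
  have := LipschitzWith.prod_snd.lipschitzOnWith.prodMk cube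
  rwa [show max (1 : NNReal) 24 = 24 by norm_num] at this

theorem norm_snField_le {p : ℝ × ℝ} (hp : ‖p‖ ≤ 2) : ‖snField p‖ ≤ 16 := by
  obtain ⟨h1, h2⟩ := norm_prod_le_iff.mp hp
  refine norm_prod_le_iff.mpr ⟨h2.trans (by norm_num), ?_⟩
  calc ‖-2 * p.1 ^ 3‖ = 2 * ‖p.1‖ ^ 3 := by simp
    _ ≤ 2 * 2 ^ 3 := by gcongr
    _ = 16 := by norm_num

theorem exists_isIntegralCurveOn_Icc_snField (t₀ : ℝ) {p : ℝ × ℝ} (hp : ‖p‖ ≤ 1) :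
    ∃ γ, γ t₀ = p ∧ IsIntegralCurveOn γ (fun _ ↦ snField) (Icc (t₀ - 16⁻¹) (t₀ + 16⁻¹)) := by
  -- `snField` is bounded by `16` on `closedBall 0 2`, so a solution starting in `closedBall 0 1`
  -- cannot leave `closedBall 0 2` within time `1/16`
  have hPL : IsPicardLindelof (fun _ ↦ snField) (tmin := t₀ - 16⁻¹) (tmax := t₀ + 16⁻¹)
      ⟨t₀, by constructor <;> linarith⟩ 0 2 1 16 24 :=
    { lipschitzOnWith := fun _ _ ↦ by simpa using lipschitzOnWith_snField
      continuousOn := fun _ _ ↦ continuousOn_const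
      norm_le := fun _ _ _ hq ↦ norm_snField_le (by simpa using hq)
      mul_max_le := by norm_num }
  exact hPL.exists_eq_forall_mem_Icc_hasDerivWithinAt (by simpa using hp)

theorem snEnergy_eq_of_isIntegralCurveOn {γ : ℝ → ℝ × ℝ} {s : Set ℝ}
    (hγ : IsIntegralCurveOn γ (fun _ ↦ snField) s) (hs : Convex ℝ s) {t₀ t : ℝ} (ht₀ : t₀ ∈ s)
    (ht : t ∈ s) : snEnergy (γ t) = snEnergy (γ t₀) := by
  have hderiv : ∀ u ∈ s, HasDerivWithinAt (fun u ↦ snEnergy (γ u)) 0 s u := fun u hu ↦ by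
    have h := ((hγ u hu).fst.pow 4).add ((hγ u hu).snd.pow 2)
    simp only [snField] at h
    exact h.congr_deriv (by ring)
  have := Convex.norm_image_sub_le_of_norm_hasDerivWithin_le hderiv (fun _ _ ↦ norm_zero.le) hs
    ht₀ ht
  simpa [sub_eq_zero] using this

theorem norm_le_one_of_snEnergy_eq_one {p : ℝ × ℝ} (h : snEnergy p = 1) : ‖p‖ ≤ 1 := by
  unfold snEnergy at h
  refine norm_prod_le_iff.mpr ⟨?_, ?_⟩ <;> rw [Real.norm_eq_abs, ← sq_le_one_iff_abs_le_one]
  · nlinarith [sq_nonneg p.2, sq_nonneg (p.1 ^ 2 - 1)]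
  · nlinarith [pow_two_nonneg (p.1 ^ 2)]

theorem norm_le_one_of_isIntegralCurveOn_snField {γ : ℝ → ℝ × ℝ} {s : Set ℝ}
    (hγ : IsIntegralCurveOn γ (fun _ ↦ snField) s) (hs : Convex ℝ s) (h0s : 0 ∈ s)
    (h0 : γ 0 = (0, 1)) {t : ℝ} (ht : t ∈ s) : ‖γ t‖ ≤ 1 :=
  norm_le_one_of_snEnergy_eq_one <| by
    rw [snEnergy_eq_of_isIntegralCurveOn hγ hs h0s ht, h0]
    norm_num [snEnergy]

theorem norm_le_one_of_isIntegralCurve_snField {γ : ℝ → ℝ × ℝ}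
    (hγ : IsIntegralCurve γ (fun _ ↦ snField)) (h0 : γ 0 = (0, 1)) (t : ℝ) : ‖γ t‖ ≤ 1 :=
  norm_le_one_of_isIntegralCurveOn_snField (hγ.isIntegralCurveOn univ) convex_univ trivial h0
    trivial

theorem exists_isIntegralCurveOn_Icc_add_snField {c : ℝ} (hc : 0 ≤ c) {γ : ℝ → ℝ × ℝ}
    (hγ : IsIntegralCurveOn γ (fun _ ↦ snField) (Icc (-c) c)) (h0 : γ 0 = (0, 1)) :
    ∃ γ', γ' 0 = (0, 1) ∧
      IsIntegralCurveOn γ' (fun _ ↦ snField) (Icc (-(c + 16⁻¹)) (c + 16⁻¹)) := by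
  have bound : ∀ t ∈ Icc (-c) c, ‖γ t‖ ≤ 1 :=
    fun t ↦ norm_le_one_of_isIntegralCurveOn_snField hγ (convex_Icc _ _) ⟨by linarith, hc⟩ h0
  obtain ⟨α, hα, hαc⟩ :=
    exists_isIntegralCurveOn_Icc_snField (-c) (bound (-c) ⟨le_rfl, by linarith⟩)
  obtain ⟨β, hβ, hβc⟩ := exists_isIntegralCurveOn_Icc_snField c (bound c ⟨by linarith, le_rfl⟩)
  set γ' := fun t ↦ if t < -c then α t else if t ≤ c then γ t else β t
  have onα : EqOn γ' α (Icc (-c - 16⁻¹) (-c)) := fun t ht ↦ by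
    rcases ht.2.lt_or_eq with h | rfl
    · simp [γ', h]
    · simp [γ', hα, hc]
  have onγ : EqOn γ' γ (Icc (-c) c) := fun t ht ↦ by simp [γ', not_lt.mpr ht.1, ht.2]
  have onβ : EqOn γ' β (Icc c (c + 16⁻¹)) := fun t ht ↦ by
    rcases ht.1.lt_or_eq with h | rfl
    · simp [γ', not_lt.mpr (by linarith : -c ≤ t), not_le.mpr h]
    · simp [γ', hβ, hc]
  have hunion : Icc (-c - 16⁻¹) (-c) ∪ Icc (-c) c ∪ Icc c (c + 16⁻¹) =
      Icc (-(c + 16⁻¹)) (c + 16⁻¹) := by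
    rw [Icc_union_Icc_eq_Icc (by linarith) (by linarith),
      Icc_union_Icc_eq_Icc (by linarith) (by linarith), neg_add']
  refine ⟨γ', (onγ ⟨by linarith, hc⟩).trans h0, hunion ▸ ?_⟩
  refine .union (isClosed_Icc.union isClosed_Icc) isClosed_Icc
    (.union isClosed_Icc isClosed_Icc ?_ (hγ.congr onγ)) ?_
  · exact (hαc.mono (Icc_subset_Icc_right (by linarith))).congr onα
  · exact (hβc.mono (Icc_subset_Icc_left (by linarith))).congr onβ

theorem exists_isIntegralCurveOn_Icc_natCast_div_snField (n : ℕ) :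
    ∃ γ, γ 0 = (0, 1) ∧
      IsIntegralCurveOn γ (fun _ ↦ snField) (Icc (-((n : ℝ) / 16)) ((n : ℝ) / 16)) := by
  induction n with
  | zero =>
    obtain ⟨γ, hγ0, hγ⟩ := exists_isIntegralCurveOn_Icc_snField 0 (p := (0, 1)) (by simp)
    exact ⟨γ, hγ0, hγ.mono (Icc_subset_Icc (by norm_num) (by norm_num))⟩
  | succ n ih =>
    obtain ⟨γ, hγ0, hγ⟩ := ih
    obtain ⟨γ', hγ'0, hγ'⟩ := exists_isIntegralCurveOn_Icc_add_snField (by positivity) hγ hγ0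
    refine ⟨γ', hγ'0, ?_⟩
    convert hγ' using 3 <;> push_cast <;> ring

theorem exists_isIntegralCurve_snField :
    ∃ γ, γ 0 = (0, 1) ∧ IsIntegralCurve γ (fun _ ↦ snField) := by
  refine exists_isIntegralCurve_of_forall_Icc (S := closedBall 0 2)
    (fun _ ↦ lipschitzOnWith_snField) fun T ↦ ?_
  obtain ⟨n, hn⟩ := exists_nat_ge (16 * T)
  obtain ⟨γ, hγ0, hγ⟩ := exists_isIntegralCurveOn_Icc_natCast_div_snField n
  have hn0 : (0 : ℝ) ≤ n / 16 := by positivity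
  have hsub : Icc (-T) T ⊆ Icc (-((n : ℝ) / 16)) (n / 16) :=
    Icc_subset_Icc (by linarith) (by linarith)
  have h0 : (0 : ℝ) ∈ Icc (-((n : ℝ) / 16)) (n / 16) := ⟨by linarith, hn0⟩
  refine ⟨γ, hγ0, hγ.mono hsub, fun t ht ↦ mem_closedBall_zero_iff.mpr ?_⟩
  exact (norm_le_one_of_isIntegralCurveOn_snField hγ (convex_Icc _ _) h0 hγ0 (hsub ht)).trans
    one_le_two

theorem eq_of_isIntegralCurve_snField {γ γ' : ℝ → ℝ × ℝ}
    (hγ : IsIntegralCurve γ (fun _ ↦ snField)) (h0 : γ 0 = (0, 1))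
    (hγ' : IsIntegralCurve γ' (fun _ ↦ snField)) (h0' : γ' 0 = (0, 1)) : γ = γ' :=
  ODE_solution_unique_univ (s := fun _ ↦ closedBall 0 2) (fun _ ↦ lipschitzOnWith_snField)
    (fun t ↦ ⟨hγ t, mem_closedBall_zero_iff.mpr
      ((norm_le_one_of_isIntegralCurve_snField hγ h0 t).trans one_le_two)⟩)
    (fun t ↦ ⟨hγ' t, mem_closedBall_zero_iff.mpr
      ((norm_le_one_of_isIntegralCurve_snField hγ' h0' t).trans one_le_two)⟩)
    (h0.trans h0'.symm)

theorem isIntegralCurve_snField_of_contDiff {f : ℝ → ℝ} (hf : ContDiff ℝ 2 f)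
    (hode : ∀ u, deriv (deriv f) u = -2 * f u ^ 3) :
    IsIntegralCurve (fun t ↦ (f t, deriv f t)) (fun _ ↦ snField) := fun t ↦ by
  have hf' : ContDiff ℝ 1 (deriv f) := (contDiff_succ_iff_deriv.mp hf).2.2
  have h2 := (hf'.differentiable one_ne_zero t).hasDerivAt
  rw [hode] at h2
  exact (hf.differentiable (by norm_num) t).hasDerivAt.prodMk h2

theorem IsIntegralCurve.deriv_fst_snField {γ : ℝ → ℝ × ℝ}
    (hγ : IsIntegralCurve γ (fun _ ↦ snField)) : deriv (fun t ↦ (γ t).1) = fun t ↦ (γ t).2 :=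
  funext fun t ↦ (hγ t).fst.deriv

theorem IsIntegralCurve.contDiff_fst_snField {γ : ℝ → ℝ × ℝ}
    (hγ : IsIntegralCurve γ (fun _ ↦ snField)) : ContDiff ℝ 2 (fun t ↦ (γ t).1) :=
  contDiff_succ_iff_deriv (n := 1).mpr ⟨fun t ↦ (hγ t).fst.differentiableAt, by simp,
    hγ.deriv_fst_snField ▸ contDiff_snd.comp (hγ.contDiff_one continuous_snField)⟩

theorem IsIntegralCurve.deriv_deriv_fst_snField {γ : ℝ → ℝ × ℝ}
    (hγ : IsIntegralCurve γ (fun _ ↦ snField)) (u : ℝ) :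
    deriv (deriv fun t ↦ (γ t).1) u = -2 * (γ u).1 ^ 3 := by
  rw [hγ.deriv_fst_snField]
  exact (hγ u).snd.deriv

/-- There is a unique global `C²` solution of `f'' = -2f³`,
`f(0) = 0`, `f'(0) = 1` (the Jacobi elliptic function `sn(·, i)`), and it
satisfies `|f| ≤ 1` and `|f'| ≤ 1` everywhere. -/
theorem sn_exists_unique_and_bounded :
    (∃! f : ℝ → ℝ, ContDiff ℝ 2 f ∧ (∀ u : ℝ, deriv (deriv f) u = -2 * f u ^ 3)
      ∧ f 0 = 0 ∧ deriv f 0 = 1) ∧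
    ∀ f : ℝ → ℝ, (ContDiff ℝ 2 f ∧ (∀ u : ℝ, deriv (deriv f) u = -2 * f u ^ 3)
      ∧ f 0 = 0 ∧ deriv f 0 = 1) →
      ∀ u : ℝ, |f u| ≤ 1 ∧ |deriv f u| ≤ 1 := by
  obtain ⟨γ, hγ0, hγ⟩ := exists_isIntegralCurve_snField
  refine ⟨⟨fun t ↦ (γ t).1, ⟨hγ.contDiff_fst_snField, hγ.deriv_deriv_fst_snField,
    by simp [hγ0], by simp [hγ.deriv_fst_snField, hγ0]⟩, ?_⟩, ?_⟩
  · rintro f ⟨hf, hode, hf0, hf'0⟩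
    have hcurve := eq_of_isIntegralCurve_snField (isIntegralCurve_snField_of_contDiff hf hode)
      (Prod.ext hf0 hf'0) hγ hγ0
    exact funext fun t ↦ congrArg Prod.fst (congrFun hcurve t)
  · rintro f ⟨hf, hode, hf0, hf'0⟩ u
    have hnorm := norm_le_one_of_isIntegralCurve_snField
      (isIntegralCurve_snField_of_contDiff hf hode) (Prod.ext hf0 hf'0) u
    exact ⟨(norm_fst_le _).trans hnorm, (norm_snd_le _).trans hnorm⟩
end

section
/- Let f : ℝ → ℝ be the unique solution of f'' = -2f³ with f(0) = 0, f'(0) = 1. Set K = ∫₀¹ dx/√(1 - x⁴). Then K is finite, f is strictly increasing on [0, K], f(K) = 1, f'(K) = 0, and K is the smallest positive zero of f'. -/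
/-!
Energy conservation gives `f'² + f⁴ = 1`. If `f'` had no positive zero, `f` would increase on
`[0, ∞)`, so `f'' = -2f³ ≤ -2f(1)³ < 0` on `[1, ∞)` and `f'` would turn negative; hence `f'` has a
first positive zero `T`. On `[0, T)` we have `f' = √(1 - f⁴) > 0`, so `f` increases from `0` to
`f(T) = 1`, and the substitution `x = f(t)` turns `∫₀¹ dx/√(1 - x⁴)` into `∫₀ᵀ dt = T`; the same
substitution shows that the integrand is integrable.
-/

open Set MeasureTheory

theorem pos_of_forall_Ioc_ne_zero {g : ℝ → ℝ} (hg : Continuous g) (h0 : 0 < g 0) {x : ℝ}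
    (hx : 0 ≤ x) (hne : ∀ y ∈ Ioc 0 x, g y ≠ 0) : 0 < g x := by
  by_contra! hgx
  obtain ⟨c, hc, hgc⟩ := intermediate_value_Icc' hx hg.continuousOn ⟨hgx, h0.le⟩
  rcases hc.1.eq_or_lt with rfl | hc0
  · exact h0.ne' hgc
  · exact hne c ⟨hc0, hc.2⟩ hgc

theorem exists_isLeast_pos_zero {g : ℝ → ℝ} (hg : Continuous g) (h0 : g 0 ≠ 0)
    (hex : ∃ u, 0 < u ∧ g u = 0) : ∃ T, IsLeast {u | 0 < u ∧ g u = 0} T := by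
  set S := {u | 0 ≤ u ∧ g u = 0}
  have hS : IsLeast S (sInf S) := by
    refine (isClosed_Ici.inter (isClosed_eq hg continuous_const)).isLeast_csInf ?_ ⟨0, ?_⟩
    · obtain ⟨u, hu, hgu⟩ := hex
      exact ⟨u, hu.le, hgu⟩
    · exact fun u hu => hu.1
  have hpos : 0 < sInf S := hS.1.1.lt_of_ne fun h => h0 (h ▸ hS.1.2)
  exact ⟨sInf S, ⟨hpos, hS.1.2⟩, fun u hu => hS.2 ⟨hu.1.le, hu.2⟩⟩

theorem pos_of_mem_Ico_of_isLeast {g : ℝ → ℝ} (hg : Continuous g) (h0 : 0 < g 0) {T : ℝ}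
    (hT : IsLeast {u | 0 < u ∧ g u = 0} T) {x : ℝ} (hx : x ∈ Ico 0 T) : 0 < g x :=
  pos_of_forall_Ioc_ne_zero hg h0 hx.1 fun _ hy hgy =>
    (hT.2 ⟨hy.1, hgy⟩).not_gt (hy.2.trans_lt hx.2)

theorem deriv_sq_add_pow_four_eq {f : ℝ → ℝ} (hf : Differentiable ℝ f)
    (hf'' : ∀ u, HasDerivAt (deriv f) (-2 * f u ^ 3) u) (u : ℝ) :
    deriv f u ^ 2 + f u ^ 4 = deriv f 0 ^ 2 + f 0 ^ 4 := by
  have hE (u : ℝ) : HasDerivAt (fun u => deriv f u ^ 2 + f u ^ 4) 0 u :=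
    (((hf'' u).fun_pow 2).fun_add ((hf u).hasDerivAt.fun_pow 4)).congr_deriv (by push_cast; ring)
  exact is_const_of_deriv_eq_zero (fun u => (hE u).differentiableAt) (fun u => (hE u).deriv) u 0

theorem exists_pos_deriv_eq_zero {f : ℝ → ℝ} (hf : Differentiable ℝ f)
    (hf'' : ∀ u, HasDerivAt (deriv f) (-2 * f u ^ 3) u) (h0 : f 0 = 0) (h1 : deriv f 0 = 1) :
    ∃ u, 0 < u ∧ deriv f u = 0 := by
  by_contra! hne
  have hpos : ∀ x ∈ Ici (0 : ℝ), 0 < deriv f x := fun x hx =>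
    pos_of_forall_Ioc_ne_zero (continuous_iff_continuousAt.2 fun u => (hf'' u).continuousAt)
      (h1 ▸ one_pos) hx fun y hy => hne y hy.1
  have hmono : StrictMonoOn f (Ici 0) :=
    strictMonoOn_of_deriv_pos (convex_Ici 0) hf.continuous.continuousOn
      fun x hx => hpos x (interior_subset hx)
  set c := f 1
  have hc : 0 < c := h0 ▸ hmono self_mem_Ici (by norm_num : (1 : ℝ) ∈ Ici 0) one_pos
  have hdecay (t : ℝ) (ht : 1 ≤ t) : deriv f t - deriv f 1 ≤ -2 * c ^ 3 * (t - 1) := by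
    refine (convex_Ici 1).image_sub_le_mul_sub_of_deriv_le
      (continuous_iff_continuousAt.2 fun u => (hf'' u).continuousAt).continuousOn
      (fun u _ => (hf'' u).differentiableAt.differentiableWithinAt) (fun x hx => ?_)
      1 self_mem_Ici t ht ht
    rw [interior_Ici] at hx
    have hcx : c ≤ f x := hmono.monotoneOn (by norm_num) (mem_Ici.2 (zero_le_one.trans hx.le))
      hx.le
    rw [(hf'' x).deriv]
    nlinarith [pow_le_pow_left₀ hc.le hcx 3]
  have hbound : deriv f 1 ≤ 1 := by
    have := deriv_sq_add_pow_four_eq hf hf'' 1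
    rw [h0, h1] at this
    nlinarith [pow_two_nonneg (f 1 ^ 2)]
  set t := 1 + 1 / c ^ 3
  have ht : 1 ≤ t := by simp only [t]; linarith [one_div_pos.2 (pow_pos hc 3)]
  have hct : c ^ 3 * (t - 1) = 1 := by simp only [t]; field_simp; ring
  linarith [hdecay t ht, hpos t (zero_le_one.trans ht)]

theorem integrableOn_and_integral_one_div_sqrt_one_sub_pow_four {f : ℝ → ℝ} {T : ℝ} (hT : 0 ≤ T)
    (hf : Differentiable ℝ f) (henergy : ∀ u, deriv f u ^ 2 + f u ^ 4 = 1)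
    (hpos : ∀ u ∈ Ioo 0 T, 0 < deriv f u) (h0 : f 0 = 0) (hT1 : f T = 1) :
    IntegrableOn (fun x => 1 / √(1 - x ^ 4)) (Icc 0 1) ∧
      ∫ x in Icc 0 1, 1 / √(1 - x ^ 4) = T := by
  have hone : EqOn (fun u => deriv f u • (1 / √(1 - f u ^ 4))) 1 (Ioo 0 T) := fun u hu => by
    have hsq : 1 - f u ^ 4 = deriv f u ^ 2 := by linarith [henergy u]
    simp [hsq, Real.sqrt_sq (hpos u hu).le, (hpos u hu).ne']
  have hcont := hf.continuous.continuousOn (s := Icc 0 T)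
  have hderiv : ∀ u ∈ Ioo 0 T, HasDerivAt f (deriv f u) u := fun u _ => (hf u).hasDerivAt
  have hnonneg : ∀ u ∈ Ioo 0 T, 0 ≤ deriv f u := fun u hu => (hpos u hu).le
  have hint := integrableOn_Icc_deriv_smul_iff_of_deriv_nonneg
    (g := fun x => 1 / √(1 - x ^ 4)) hcont hderiv hnonneg hT
  have hsubst := integral_Icc_deriv_smul_of_deriv_nonneg
    (g := fun x => 1 / √(1 - x ^ 4)) hcont hderiv hnonneg hT
  rw [h0, hT1] at hint hsubst
  constructor
  · rw [← hint, integrableOn_Icc_iff_integrableOn_Ioo]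
    exact (integrableOn_congr_fun hone measurableSet_Ioo).2 (integrableOn_const (by simp))
  · rw [← hsubst, integral_Icc_eq_integral_Ioo, setIntegral_congr_fun measurableSet_Ioo hone]
    simp [hT]

/-- For the unique solution `f` of `f'' = -2f³`, `f(0)=0`, `f'(0)=1`,
the quantity `K = ∫₀¹ dx/√(1-x⁴)` is finite, `f` is strictly increasing on `[0,K]`,
`f(K) = 1`, `f'(K) = 0`, and `K` is the smallest positive zero of `f'`. -/
theorem sn_quarter_period
    (f : ℝ → ℝ) (hf : ContDiff ℝ 2 f)
    (hODE : ∀ u : ℝ, deriv (deriv f) u = -2 * f u ^ 3)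
    (h0 : f 0 = 0) (h1 : deriv f 0 = 1)
    (K : ℝ) (hK : K = ∫ x in (0:ℝ)..1, 1 / Real.sqrt (1 - x ^ 4)) :
    IntervalIntegrable (fun x => 1 / Real.sqrt (1 - x ^ 4)) MeasureTheory.volume 0 1 ∧
    StrictMonoOn f (Set.Icc 0 K) ∧
    f K = 1 ∧
    deriv f K = 0 ∧
    IsLeast {u : ℝ | 0 < u ∧ deriv f u = 0} K := by
  have hf' : Differentiable ℝ f := hf.differentiable (by norm_num)
  have hf'' (u : ℝ) : HasDerivAt (deriv f) (-2 * f u ^ 3) u :=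
    hODE u ▸ (hf.differentiable_deriv_two u).hasDerivAt
  have henergy (u : ℝ) : deriv f u ^ 2 + f u ^ 4 = 1 := by
    rw [deriv_sq_add_pow_four_eq hf' hf'' u, h0, h1]; norm_num
  have hcont' : Continuous (deriv f) := hf.continuous_deriv (by norm_num)
  obtain ⟨T, hT⟩ := exists_isLeast_pos_zero hcont' (by simp [h1])
    (exists_pos_deriv_eq_zero hf' hf'' h0 h1)
  have hpos (x : ℝ) (hx : x ∈ Ico 0 T) : 0 < deriv f x :=
    pos_of_mem_Ico_of_isLeast hcont' (by simp [h1]) hT hx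
  have hmono : StrictMonoOn f (Icc 0 T) :=
    strictMonoOn_of_deriv_pos (convex_Icc 0 T) hf'.continuous.continuousOn
      fun x hx => hpos x (Ioo_subset_Ico_self (by rwa [interior_Icc] at hx))
  have hfT : f T = 1 := by
    have hfT_pos : 0 < f T :=
      h0 ▸ hmono (left_mem_Icc.2 hT.1.1.le) (right_mem_Icc.2 hT.1.1.le) hT.1.1
    have := henergy T
    rw [hT.1.2] at this
    exact (pow_eq_one_iff_of_nonneg (n := 4) hfT_pos.le (by norm_num)).1 (by linarith)
  obtain ⟨hint, hval⟩ := integrableOn_and_integral_one_div_sqrt_one_sub_pow_four hT.1.1.le hf'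
    henergy (fun x hx => hpos x (Ioo_subset_Ico_self hx)) h0 hfT
  have hKT : K = T := by
    rw [hK, intervalIntegral.integral_of_le zero_le_one, ← integral_Icc_eq_integral_Ioc, hval]
  subst hKT
  exact ⟨(intervalIntegrable_iff_integrableOn_Icc_of_le zero_le_one).2 hint, hmono, hfT, hT.1.2, hT⟩
end

section
/- Let f : ℝ → ℝ be the unique solution of f'' = -2f³ with f(0) = 0, f'(0) = 1, and let K = ∫₀¹ dx/√(1 - x⁴). Then for all u ∈ ℝ: (i) f(-u) = -f(u); (ii) f(2K - u) = f(u); (iii) f(u + 2K) = -f(u); hence (iv) f is periodic with period 4K. -/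
/-!
`f` is the lemniscatic sine. By the energy identity `f'² + f⁴ = 1`, as long as `f' > 0` the
function `f` inverts `arcsl y = ∫₀^y dx/√(1-x⁴)`; as `arcsl` is bounded by `arcsl 1 = K`, `f'` must
vanish, and its first positive zero is `K`, where `f = 1` and `f' = 0`. The equation is invariant
under `u ↦ c - u` and `f ↦ -f`, so by uniqueness of solutions (the vector field
`(p, q) ↦ (q, -2p³)` is locally Lipschitz) `u ↦ -f (-u)` and `u ↦ f (2K - u)`, which share the
initial data of `f` at `0` and at `K`, equal `f`. Composing the two symmetries gives the rest.
-/

open Set MeasureTheory Filter intervalIntegral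

theorem ODE_solution_unique_univ_of_locallyLipschitz {E : Type*} [NormedAddCommGroup E]
    [NormedSpace ℝ E] {v : E → E} (hv : LocallyLipschitz v) {f g : ℝ → E}
    (hf : ∀ t, HasDerivAt f (v (f t)) t) (hg : ∀ t, HasDerivAt g (v (g t)) t) {t₀ : ℝ}
    (heq : f t₀ = g t₀) : f = g := by
  ext t
  obtain ⟨A, B, ht, ht₀⟩ : ∃ A B, t ∈ Ioo A B ∧ t₀ ∈ Ioo A B :=
    ⟨min t t₀ - 1, max t t₀ + 1, by grind, by grind⟩
  have hcont : ∀ {h : ℝ → E}, (∀ t, HasDerivAt h (v (h t)) t) → Continuous h :=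
    fun hh => continuous_iff_continuousAt.2 fun t => (hh t).continuousAt
  set s := f '' Icc A B ∪ g '' Icc A B
  have hs : IsCompact s :=
    (isCompact_Icc.image (hcont hf)).union (isCompact_Icc.image (hcont hg))
  obtain ⟨K, hK⟩ := (hv.locallyLipschitzOn (s := s)).exists_lipschitzOnWith_of_compact hs
  exact ODE_solution_unique_of_mem_Ioo (v := fun _ => v) (s := fun _ => s) (fun _ _ => hK) ht₀
    (fun t ht => ⟨hf t, Or.inl ⟨t, Ioo_subset_Icc_self ht, rfl⟩⟩)
    (fun t ht => ⟨hg t, Or.inr ⟨t, Ioo_subset_Icc_self ht, rfl⟩⟩) heq ht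

noncomputable def arcsl (y : ℝ) : ℝ := ∫ x in (0 : ℝ)..y, 1 / Real.sqrt (1 - x ^ 4)

lemma intervalIntegrable_one_div_sqrt_one_sub_pow_four :
    IntervalIntegrable (fun x : ℝ => 1 / Real.sqrt (1 - x ^ 4)) volume 0 1 := by
  have hdom : IntervalIntegrable (fun x : ℝ => (1 - x) ^ (-(1 / 2) : ℝ)) volume 0 1 := by
    have h : IntervalIntegrable (fun x : ℝ => x ^ (-(1 / 2) : ℝ)) volume 0 1 :=
      intervalIntegrable_rpow' (by norm_num)
    simpa using (h.comp_sub_left 1).symm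
  refine hdom.mono_fun (Measurable.aestronglyMeasurable (by fun_prop)) ?_
  rw [EventuallyLE, ae_restrict_iff' measurableSet_uIoc, uIoc_of_le zero_le_one]
  filter_upwards with x ⟨hx0, hx1⟩
  rw [Real.norm_of_nonneg (by positivity), Real.norm_of_nonneg (by positivity),
    Real.rpow_neg (by linarith), ← Real.sqrt_eq_rpow, one_div]
  rcases hx1.eq_or_lt with rfl | hx1
  · simp
  · have : 1 - x ≤ 1 - x ^ 4 := by nlinarith [pow_le_one₀ hx0.le hx1.le (n := 3)]
    exact inv_anti₀ (Real.sqrt_pos.2 (by linarith)) (Real.sqrt_le_sqrt this)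

lemma continuousOn_arcsl : ContinuousOn arcsl (Icc 0 1) := by
  have h := (intervalIntegrable_iff_integrableOn_Icc_of_le zero_le_one).1
    intervalIntegrable_one_div_sqrt_one_sub_pow_four
  rw [← uIcc_of_le zero_le_one] at h ⊢
  exact continuousOn_primitive_interval h

lemma arcsl_le_arcsl_one {y : ℝ} (hy : y ∈ Icc (0 : ℝ) 1) : arcsl y ≤ arcsl 1 :=
  intervalIntegral.integral_mono_interval le_rfl hy.1 hy.2
    (Eventually.of_forall fun x => by positivity) intervalIntegrable_one_div_sqrt_one_sub_pow_four

lemma hasDerivAt_arcsl {y : ℝ} (hy : y ∈ Ioo (-1 : ℝ) 1) :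
    HasDerivAt arcsl (1 / Real.sqrt (1 - y ^ 4)) y := by
  have hcont : ∀ x ∈ Ioo (-1 : ℝ) 1, ContinuousAt (fun x : ℝ => 1 / Real.sqrt (1 - x ^ 4)) x := by
    intro x hx
    have : x ^ 4 < 1 := by
      have := sq_lt_one_iff_abs_lt_one x |>.2 (abs_lt.2 hx)
      nlinarith [sq_nonneg x]
    exact continuousAt_const.div (by fun_prop) (Real.sqrt_pos.2 (by linarith)).ne'
  have hsub : uIcc 0 y ⊆ Ioo (-1 : ℝ) 1 :=
    ordConnected_Ioo.uIcc_subset ⟨by norm_num, by norm_num⟩ hy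
  exact integral_hasDerivAt_right
    (ContinuousOn.intervalIntegrable fun x hx => (hcont x (hsub hx)).continuousWithinAt)
    (ContinuousAt.stronglyMeasurableAtFilter isOpen_Ioo hcont y hy) (hcont y hy)

lemma ContinuousOn.exists_first_zero {g : ℝ → ℝ} {a b : ℝ} (hg : ContinuousOn g (Icc a b))
    (hab : a ≤ b) (ha : 0 < g a) (hb : g b ≤ 0) :
    ∃ T ∈ Ioc a b, g T = 0 ∧ ∀ t ∈ Ico a T, 0 < g t := by
  set S := Icc a b ∩ g ⁻¹' Iic 0
  have hS : IsCompact S := isCompact_Icc.of_isClosed_subset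
    (hg.preimage_isClosed_of_isClosed isClosed_Icc isClosed_Iic) inter_subset_left
  have hTS : sInf S ∈ S := hS.sInf_mem ⟨b, ⟨hab, le_rfl⟩, hb⟩
  set T := sInf S
  have hpos : ∀ t ∈ Ico a T, 0 < g t := fun t ht => by
    by_contra! hgt
    exact (csInf_le hS.bddBelow ⟨⟨ht.1, ht.2.le.trans hTS.1.2⟩, hgt⟩).not_gt ht.2
  have haT : a < T := hTS.1.1.lt_of_ne fun h => (h ▸ ha).not_ge hTS.2
  obtain ⟨z, hz, hgz⟩ := intermediate_value_Icc' haT.le (hg.mono (Icc_subset_Icc_right hTS.1.2))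
    ⟨hTS.2, ha.le⟩
  obtain rfl : z = T := hz.2.eq_or_lt.resolve_right fun hzT => (hpos z ⟨hz.1, hzT⟩).ne' hgz
  exact ⟨T, ⟨haT, hTS.1.2⟩, hgz, hpos⟩

structure IsLemniscateSolution (f : ℝ → ℝ) : Prop where
  contDiff : ContDiff ℝ 2 f
  deriv_deriv : ∀ u, deriv (deriv f) u = -2 * f u ^ 3

namespace IsLemniscateSolution

variable {f g : ℝ → ℝ}

lemma differentiable (hf : IsLemniscateSolution f) : Differentiable ℝ f :=
  hf.contDiff.differentiable (by norm_num)

lemma differentiable_deriv (hf : IsLemniscateSolution f) : Differentiable ℝ (deriv f) :=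
  ((contDiff_succ_iff_deriv (n := 1)).1 hf.contDiff).2.2.differentiable one_ne_zero

lemma hasDerivAt_prod_deriv (hf : IsLemniscateSolution f) (t : ℝ) :
    HasDerivAt (fun t => (f t, deriv f t)) (deriv f t, -2 * f t ^ 3) t := by
  simpa only [hf.deriv_deriv] using
    (hf.differentiable t).hasDerivAt.prodMk (hf.differentiable_deriv t).hasDerivAt

lemma energy_eq (hf : IsLemniscateSolution f) (u a : ℝ) :
    deriv f u ^ 2 + f u ^ 4 = deriv f a ^ 2 + f a ^ 4 := by
  have hE : ∀ t, HasDerivAt (fun t => deriv f t ^ 2 + f t ^ 4) 0 t := fun t => by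
    refine (((hf.differentiable_deriv t).hasDerivAt.pow 2).add
      ((hf.differentiable t).hasDerivAt.pow 4)).congr_deriv ?_
    rw [hf.deriv_deriv]
    ring
  exact is_const_of_deriv_eq_zero (fun t => (hE t).differentiableAt) (fun t => (hE t).deriv) u a

lemma eq_of_eq_of_deriv_eq (hf : IsLemniscateSolution f) (hg : IsLemniscateSolution g) {a : ℝ}
    (h0 : f a = g a) (h1 : deriv f a = deriv g a) : f = g := by
  have hv : LocallyLipschitz fun p : ℝ × ℝ => (p.2, -2 * p.1 ^ 3) :=
    ContDiff.locallyLipschitz (𝕂 := ℝ) (by fun_prop)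
  have := ODE_solution_unique_univ_of_locallyLipschitz hv hf.hasDerivAt_prod_deriv
    hg.hasDerivAt_prod_deriv (t₀ := a) (Prod.ext h0 h1)
  exact funext fun u => congrArg Prod.fst (congrFun this u)

lemma neg (hf : IsLemniscateSolution f) : IsLemniscateSolution (fun u => -f u) where
  contDiff := hf.contDiff.neg
  deriv_deriv u := by
    simp only [deriv.fun_neg', hf.deriv_deriv]
    ring

lemma comp_const_sub (hf : IsLemniscateSolution f) (c : ℝ) :
    IsLemniscateSolution (fun u => f (c - u)) where
  contDiff := hf.contDiff.comp (contDiff_const.sub contDiff_id)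
  deriv_deriv u := by
    have hd : deriv (fun u => f (c - u)) = fun u => -deriv f (c - u) :=
      funext fun _ => deriv_comp_const_sub ..
    simp only [hd, deriv.fun_neg', deriv_comp_const_sub, neg_neg, hf.deriv_deriv]

end IsLemniscateSolution

namespace IsLemniscateSolution

variable {f : ℝ → ℝ}

lemma energy_eq_one (hf : IsLemniscateSolution f) (h0 : f 0 = 0) (h1 : deriv f 0 = 1) (u : ℝ) :
    deriv f u ^ 2 + f u ^ 4 = 1 := by
  rw [hf.energy_eq u 0, h0, h1]
  norm_num

lemma mapsTo_Icc_of_deriv_pos (hf : IsLemniscateSolution f) (h0 : f 0 = 0) (h1 : deriv f 0 = 1)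
    {b : ℝ} (hpos : ∀ t ∈ Ico 0 b, 0 < deriv f t) : MapsTo f (Icc 0 b) (Icc 0 1) := by
  intro t ht
  have hmono : StrictMonoOn f (Icc 0 b) :=
    strictMonoOn_of_deriv_pos (convex_Icc 0 b) hf.differentiable.continuous.continuousOn
      fun x hx => hpos x (Ioo_subset_Ico_self (by rwa [interior_Icc] at hx))
  have hnonneg : 0 ≤ f t := h0 ▸ hmono.monotoneOn ⟨le_rfl, ht.1.trans ht.2⟩ ht ht.1
  have h4 : f t ^ 4 ≤ 1 := by nlinarith [hf.energy_eq_one h0 h1 t, sq_nonneg (deriv f t)]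
  exact ⟨hnonneg, (pow_le_one_iff_of_nonneg hnonneg (by norm_num)).1 h4⟩

lemma arcsl_apply_of_deriv_pos (hf : IsLemniscateSolution f) (h0 : f 0 = 0)
    (h1 : deriv f 0 = 1) {b : ℝ} (hb : 0 ≤ b) (hpos : ∀ t ∈ Ico 0 b, 0 < deriv f t) :
    arcsl (f b) = b := by
  have hmaps := hf.mapsTo_Icc_of_deriv_pos h0 h1 hpos
  have hderiv : ∀ t ∈ Ico 0 b, HasDerivAt (fun u => arcsl (f u) - u) 0 t := by
    intro t ht
    have hE := hf.energy_eq_one h0 h1 t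
    have hsqrt : Real.sqrt (1 - f t ^ 4) = deriv f t := by
      rw [← hE, add_sub_cancel_right, Real.sqrt_sq (hpos t ht).le]
    have hlt : f t < 1 := by
      by_contra! h
      nlinarith [one_le_pow₀ h (n := 4), hpos t ht]
    have hmem : f t ∈ Ioo (-1 : ℝ) 1 := ⟨by linarith [(hmaps (Ico_subset_Icc_self ht)).1], hlt⟩
    refine (((hasDerivAt_arcsl hmem).comp t (hf.differentiable t).hasDerivAt).sub
      (hasDerivAt_id t)).congr_deriv ?_
    rw [hsqrt, one_div, inv_mul_cancel₀ (hpos t ht).ne', sub_self]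
  have hconst := constant_of_has_deriv_right_zero
    ((continuousOn_arcsl.comp hf.differentiable.continuous.continuousOn hmaps).sub continuousOn_id)
    (fun t ht => (hderiv t ht).hasDerivWithinAt) b ⟨hb, le_rfl⟩
  have harcsl0 : arcsl 0 = 0 := integral_same
  simp only [Pi.sub_apply, Function.comp_apply, id, h0, harcsl0, sub_zero] at hconst
  linarith

lemma exists_deriv_nonpos (hf : IsLemniscateSolution f) (h0 : f 0 = 0) (h1 : deriv f 0 = 1) :
    ∃ b, 0 ≤ b ∧ deriv f b ≤ 0 := by
  by_contra! hpos
  have hpos' : ∀ t ∈ Ico 0 (arcsl 1 + 1), 0 < deriv f t := fun t ht => hpos t ht.1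
  have hK : 0 ≤ arcsl 1 := integral_nonneg zero_le_one fun x _ => by positivity
  have hb : 0 ≤ arcsl 1 + 1 := by linarith
  have h := hf.arcsl_apply_of_deriv_pos h0 h1 hb hpos'
  have hle := arcsl_le_arcsl_one (hf.mapsTo_Icc_of_deriv_pos h0 h1 hpos' ⟨hb, le_rfl⟩)
  linarith

lemma apply_arcsl_one (hf : IsLemniscateSolution f) (h0 : f 0 = 0) (h1 : deriv f 0 = 1) :
    f (arcsl 1) = 1 ∧ deriv f (arcsl 1) = 0 := by
  obtain ⟨b, hb, hfb⟩ := hf.exists_deriv_nonpos h0 h1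
  obtain ⟨T, hT, hf'T, hpos⟩ :=
    hf.differentiable_deriv.continuous.continuousOn.exists_first_zero hb (h1 ▸ one_pos) hfb
  have hfT : f T = 1 := by
    have h4 : f T ^ 4 = 1 := by simpa [hf'T] using hf.energy_eq_one h0 h1 T
    have hnonneg := (hf.mapsTo_Icc_of_deriv_pos h0 h1 hpos ⟨hT.1.le, le_rfl⟩).1
    exact (pow_eq_one_iff_of_nonneg hnonneg (by norm_num)).1 h4
  have hTK : arcsl 1 = T := hfT ▸ hf.arcsl_apply_of_deriv_pos h0 h1 hT.1.le hpos
  exact hTK ▸ ⟨hfT, hf'T⟩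

end IsLemniscateSolution

/-- Symmetry and periodicity of the Jacobi elliptic function `sn(·,i)`,
defined as the unique global solution of `f'' = -2f³`, `f(0)=0`, `f'(0)=1`, with
quarter period `K = ∫₀¹ dx/√(1-x⁴)`: it is odd, symmetric about `K`, antiperiodic
with antiperiod `2K`, hence periodic with period `4K`. -/
theorem sn_symmetries_and_periodicity
    (f : ℝ → ℝ) (hf : ContDiff ℝ 2 f)
    (hODE : ∀ u : ℝ, deriv (deriv f) u = -2 * f u ^ 3)
    (h0 : f 0 = 0) (h1 : deriv f 0 = 1)
    (K : ℝ) (hK : K = ∫ x in (0:ℝ)..1, 1 / Real.sqrt (1 - x ^ 4)) :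
    (∀ u : ℝ, f (-u) = -f u) ∧
    (∀ u : ℝ, f (2 * K - u) = f u) ∧
    (∀ u : ℝ, f (u + 2 * K) = -f u) ∧
    Function.Periodic f (4 * K) := by
  have hsol : IsLemniscateSolution f := ⟨hf, hODE⟩
  obtain ⟨hfK, hf'K⟩ : f K = 1 ∧ deriv f K = 0 := hK ▸ hsol.apply_arcsl_one h0 h1
  have hodd : ∀ u, f (-u) = -f u := by
    have h := (hsol.comp_const_sub 0).neg.eq_of_eq_of_deriv_eq hsol (a := 0)
      (by simp [h0]) (by simp [deriv_comp_neg, h1])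
    intro u
    simpa using (congrFun h (-u)).symm
  have hsym : ∀ u, f (2 * K - u) = f u := by
    have h := (hsol.comp_const_sub (2 * K)).eq_of_eq_of_deriv_eq hsol (a := K)
      (by ring_nf) (by rw [deriv_comp_const_sub]; ring_nf; simp [hf'K])
    exact congrFun h
  have hanti : ∀ u, f (u + 2 * K) = -f u := fun u => by
    rw [← hsym, ← hodd]
    ring_nf
  refine ⟨hodd, hsym, hanti, fun u => ?_⟩
  rw [show u + 4 * K = u + 2 * K + 2 * K by ring, hanti, hanti, neg_neg]
end

section
/- Let f : ℝ → ℝ be three times differentiable with f'' = -2f³, let λ > 0, μ ≠ 0, θ ∈ ℝ, and set ω = (λ/2)^{1/4} μ and φ₀(t) = μ (2/λ)^{1/4} f(ω t + θ). Then g(t) = f'(ω t + θ) satisfies the linearized fluctuation equation g''(t) + 3λ φ₀(t)² g(t) = 0 for all t ∈ ℝ. -/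
/-!
Differentiating the equation `f'' = -2 f³` once gives `f''' = -6 f² f'`, i.e. `f'` solves the
linearization of `f'' = -2 f³` around `f`. Rescaling time by `ω` multiplies second derivatives
by `ω²`, and the amplitude `μ (2/λ)^{1/4}` of `φ₀` is exactly the one for which
`3 λ φ₀² = 6 ω² f²`, so the linearized equation is carried over to `g`.
-/

theorem deriv_comp_mul_add_s6 {𝕜 F : Type*} [NontriviallyNormedField 𝕜] [NormedAddCommGroup F]
    [NormedSpace 𝕜 F] (h : 𝕜 → F) (a b : 𝕜) :
    deriv (fun s => h (a * s + b)) = fun x => a • deriv h (a * x + b) :=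
  funext fun x =>
    (deriv_comp_mul_left a (fun y => h (y + b)) x).trans (by rw [deriv_comp_add_const])

theorem deriv_deriv_deriv_of_deriv_deriv_eq_mul_pow_three {𝕜 : Type*}
    [NontriviallyNormedField 𝕜] {f : 𝕜 → 𝕜} (hf : Differentiable 𝕜 f) {c : 𝕜}
    (hODE : ∀ u, deriv (deriv f) u = c * f u ^ 3) (u : 𝕜) : deriv (deriv (deriv f)) u = 3 * c * f u ^ 2 * deriv f u := by
  rw [funext hODE, deriv_const_mul_field, deriv_fun_pow (hf u)]
  push_cast
  ring

theorem Real.mul_sq_inv_rpow_quarter {x : ℝ} (hx : 0 ≤ x) :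
    x * (x⁻¹ ^ (1 / 4 : ℝ)) ^ 2 = (x ^ (1 / 4 : ℝ)) ^ 2 := by
  have hx4 : (x ^ (1 / 4 : ℝ)) ^ 4 = x := by
    rw [← Real.rpow_natCast, ← Real.rpow_mul hx]
    norm_num
  rw [Real.inv_rpow hx]
  rcases eq_or_ne (x ^ (1 / 4 : ℝ)) 0 with h0 | h0
  · rw [h0]
    simp
  · nth_rewrite 1 [← hx4]
    field_simp

theorem fluctuation_equation_solution_general
    (f : ℝ → ℝ) (hf : Differentiable ℝ f)
    (hODE : ∀ u : ℝ, deriv (deriv f) u = -2 * f u ^ 3)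
    (lam μ θ : ℝ) (hlam : 0 < lam)
    (ω : ℝ) (hω : ω = (lam / 2) ^ ((1 : ℝ) / 4) * μ)
    (φ₀ g : ℝ → ℝ)
    (hφ₀ : ∀ t : ℝ, φ₀ t = μ * (2 / lam) ^ ((1 : ℝ) / 4) * f (ω * t + θ))
    (hg : ∀ t : ℝ, g t = deriv f (ω * t + θ)) :
    ∀ t : ℝ, deriv (deriv g) t + 3 * lam * φ₀ t ^ 2 * g t = 0 := by
  intro t
  have hg'' : deriv (deriv g) t = ω * (ω * deriv (deriv (deriv f)) (ω * t + θ)) := by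
    simp only [funext hg, deriv_comp_mul_add_s6, smul_eq_mul, deriv_const_mul_field']
  have hscale :
      lam * ((2 / lam) ^ ((1 : ℝ) / 4)) ^ 2 = 2 * ((lam / 2) ^ ((1 : ℝ) / 4)) ^ 2 := by
    have h := Real.mul_sq_inv_rpow_quarter (x := lam / 2) (by positivity)
    rw [inv_div] at h
    linarith
  rw [hg'', deriv_deriv_deriv_of_deriv_deriv_eq_mul_pow_three hf hODE, hg, hφ₀]
  linear_combination 3 * μ ^ 2 * f (ω * t + θ) ^ 2 * deriv f (ω * t + θ) * hscale
    - 6 * f (ω * t + θ) ^ 2 * deriv f (ω * t + θ) * (ω + (lam / 2) ^ ((1 : ℝ) / 4) * μ)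
      * hω

/-- If `f'' = -2f³` and `φ₀(t) = μ(2/λ)^{1/4} f(ωt + θ)` with
`ω = (λ/2)^{1/4}μ`, then `g(t) = f'(ωt + θ)` solves the linearized fluctuation
equation `g'' + 3λφ₀²g = 0`. -/
theorem fluctuation_equation_solution
    (f : ℝ → ℝ) (hf : Differentiable ℝ f) (hf' : Differentiable ℝ (deriv f))
    (hf'' : Differentiable ℝ (deriv (deriv f)))
    (hODE : ∀ u : ℝ, deriv (deriv f) u = -2 * f u ^ 3)
    (lam μ θ : ℝ) (hlam : 0 < lam) (hμ : μ ≠ 0)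
    (ω : ℝ) (hω : ω = (lam / 2) ^ ((1 : ℝ) / 4) * μ)
    (φ₀ g : ℝ → ℝ)
    (hφ₀ : ∀ t : ℝ, φ₀ t = μ * (2 / lam) ^ ((1 : ℝ) / 4) * f (ω * t + θ))
    (hg : ∀ t : ℝ, g t = deriv f (ω * t + θ)) :
    ∀ t : ℝ, deriv (deriv g) t + 3 * lam * φ₀ t ^ 2 * g t = 0 :=
  fluctuation_equation_solution_general f hf hODE lam μ θ hlam ω hω φ₀ g hφ₀ hg
end

section
/- Let f : ℝ → ℝ be the unique solution of f'' = -2f³ with f(0) = 0, f'(0) = 1, and K = ∫₀¹ dx/√(1 - x⁴). For μ > 0, λ > 0 define the rest-frame two-point function D(t; μ, λ) = (1/(μ (8λ)^{1/4})) f'((λ/2)^{1/4} μ t + K). Then for every s > 0 and all t ∈ ℝ, D(t; s·μ, s⁻⁴·λ) = D(t; μ, λ). Consequently D satisfies the Callan–Symanzik scaling equation μ ∂D/∂μ - 4λ ∂D/∂λ = 0, corresponding to beta function β(λ) = -4λ and anomalous dimension γ = 0. -/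
/-!
Since `(8λ)^{1/4} = 2 (λ/2)^{1/4}`, the two-point function depends on `(μ, λ)` only through the
mass `m = (λ/2)^{1/4} μ`: `D(t; μ, λ) = f'(m t + K) / (2m)`. The flow `μ ↦ sμ`, `λ ↦ s⁻⁴λ` leaves
`m` fixed, and infinitesimally `μ ∂m/∂μ = m = 4λ ∂m/∂λ`, which is the Callan–Symanzik equation
for any function of `m`.
-/

open Filter Topology

noncomputable def invariantMass (μ lam : ℝ) : ℝ := (lam / 2) ^ ((1 : ℝ) / 4) * μ

lemma rpow_quarter_div_pow_four {x s : ℝ} (hx : 0 ≤ x) (hs : 0 < s) :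
    (x / s ^ 4) ^ ((1 : ℝ) / 4) = x ^ ((1 : ℝ) / 4) / s := by
  rw [Real.div_rpow hx (by positivity), ← Real.rpow_natCast s 4, ← Real.rpow_mul hs.le]
  norm_num

lemma invariantMass_scale {s : ℝ} (hs : 0 < s) (μ : ℝ) {lam : ℝ} (hlam : 0 ≤ lam) :
    invariantMass (s * μ) (lam / s ^ 4) = invariantMass μ lam := by
  rw [invariantMass, invariantMass, div_right_comm, rpow_quarter_div_pow_four (by positivity) hs]
  field_simp

lemma mul_rpow_quarter_eight_mul (μ : ℝ) {lam : ℝ} (hlam : 0 ≤ lam) :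
    μ * (8 * lam) ^ ((1 : ℝ) / 4) = 2 * invariantMass μ lam := by
  have h16 : (16 : ℝ) ^ ((1 : ℝ) / 4) = 2 := by
    rw [show (16 : ℝ) = 2 ^ (4 : ℝ) by norm_num, ← Real.rpow_mul (by norm_num)]
    norm_num
  rw [invariantMass, show 8 * lam = 16 * (lam / 2) by ring,
    Real.mul_rpow (by norm_num) (by positivity), h16]
  ring

lemma hasDerivAt_invariantMass_left (μ lam : ℝ) :
    HasDerivAt (fun m => invariantMass m lam) ((lam / 2) ^ ((1 : ℝ) / 4)) μ := by
  unfold invariantMass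
  simpa using (hasDerivAt_id μ).const_mul ((lam / 2) ^ ((1 : ℝ) / 4))

lemma hasDerivAt_invariantMass_right (μ : ℝ) {lam : ℝ} (hlam : 0 < lam) :
    HasDerivAt (fun l => invariantMass μ l) (invariantMass μ lam / (4 * lam)) lam := by
  have hroot : HasDerivAt (fun l : ℝ => (l / 2) ^ ((1 : ℝ) / 4))
      (1 / 2 * ((1 : ℝ) / 4) * (lam / 2) ^ ((1 : ℝ) / 4 - 1)) lam :=
    ((hasDerivAt_id' lam).div_const 2).rpow_const (Or.inl (by positivity))
  refine (hroot.mul_const μ).congr_deriv ?_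
  rw [invariantMass, Real.rpow_sub (by positivity), Real.rpow_one]
  field_simp

theorem callanSymanzik_comp_invariantMass {G : ℝ → ℝ} {μ lam : ℝ} (hlam : 0 < lam)
    (hG : DifferentiableAt ℝ G (invariantMass μ lam)) :
    μ * deriv (fun m => G (invariantMass m lam)) μ
      - 4 * lam * deriv (fun l => G (invariantMass μ l)) lam = 0 := by
  have hμ : HasDerivAt (fun m => G (invariantMass m lam))
      (deriv G (invariantMass μ lam) * (lam / 2) ^ ((1 : ℝ) / 4)) μ :=
    hG.hasDerivAt.comp μ (hasDerivAt_invariantMass_left μ lam)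
  have hl : HasDerivAt (fun l => G (invariantMass μ l))
      (deriv G (invariantMass μ lam) * (invariantMass μ lam / (4 * lam))) lam :=
    hG.hasDerivAt.comp lam (hasDerivAt_invariantMass_right μ hlam)
  rw [hμ.deriv, hl.deriv, invariantMass]
  field_simp
  ring

theorem callan_symanzik_two_point_general
    (f : ℝ → ℝ) (hf : ContDiff ℝ 2 f)
    (K : ℝ)
    (D : ℝ → ℝ → ℝ → ℝ)
    (hD : ∀ t μ lam : ℝ, D t μ lam =
      (1 / (μ * (8 * lam) ^ ((1 : ℝ) / 4))) *
        deriv f ((lam / 2) ^ ((1 : ℝ) / 4) * μ * t + K)) :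
    (∀ s : ℝ, 0 < s → ∀ t μ lam : ℝ, 0 < μ → 0 < lam →
      D t (s * μ) (lam / s ^ 4) = D t μ lam) ∧
    (∀ t μ lam : ℝ, 0 < μ → 0 < lam →
      μ * deriv (fun m => D t m lam) μ - 4 * lam * deriv (fun l => D t μ l) lam = 0) := by
  set G : ℝ → ℝ → ℝ := fun t m => (2 * m)⁻¹ * deriv f (m * t + K)
  have hDG : ∀ t μ lam, 0 ≤ lam → D t μ lam = G t (invariantMass μ lam) := fun t μ lam hlam => by
    rw [hD, mul_rpow_quarter_eight_mul μ hlam, one_div, invariantMass]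
  refine ⟨fun s hs t μ lam _ hlam => ?_, fun t μ lam hμ hlam => ?_⟩
  · rw [hDG _ _ _ (by positivity), hDG _ _ _ hlam.le, invariantMass_scale hs μ hlam.le]
  · have hm : invariantMass μ lam ≠ 0 := by rw [invariantMass]; positivity
    have hG : DifferentiableAt ℝ (G t) (invariantMass μ lam) :=
      ((differentiableAt_id.const_mul 2).inv (by simpa using hm)).mul
        (hf.differentiable_deriv_two.differentiableAt.comp _
          ((differentiableAt_id.mul_const t).add_const K))
    have hDμ : (fun m => D t m lam) = fun m => G t (invariantMass m lam) :=
      funext fun m => hDG t m lam hlam.le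
    have hDlam : (fun l => D t μ l) =ᶠ[𝓝 lam] fun l => G t (invariantMass μ l) :=
      (lt_mem_nhds hlam).mono fun l hl => hDG t μ l hl.le
    rw [hDμ, hDlam.deriv_eq]
    exact callanSymanzik_comp_invariantMass hlam hG

/-- The rest-frame two-point function
`D(t; μ, λ) = f'((λ/2)^{1/4} μ t + K)/(μ(8λ)^{1/4})` is invariant under the scaling
`μ ↦ sμ`, `λ ↦ s⁻⁴λ`, and consequently satisfies the Callan–Symanzik equation
`μ ∂D/∂μ - 4λ ∂D/∂λ = 0` (beta function `β(λ) = -4λ`, anomalous dimension `γ = 0`). -/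
theorem callan_symanzik_two_point
    (f : ℝ → ℝ) (hf : ContDiff ℝ 2 f)
    (hODE : ∀ u : ℝ, deriv (deriv f) u = -2 * f u ^ 3)
    (h0 : f 0 = 0) (h1 : deriv f 0 = 1)
    (K : ℝ) (hK : K = ∫ x in (0:ℝ)..1, 1 / Real.sqrt (1 - x ^ 4))
    (D : ℝ → ℝ → ℝ → ℝ)
    (hD : ∀ t μ lam : ℝ, D t μ lam =
      (1 / (μ * (8 * lam) ^ ((1 : ℝ) / 4))) *
        deriv f ((lam / 2) ^ ((1 : ℝ) / 4) * μ * t + K)) :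
    (∀ s : ℝ, 0 < s → ∀ t μ lam : ℝ, 0 < μ → 0 < lam →
      D t (s * μ) (lam / s ^ 4) = D t μ lam) ∧
    (∀ t μ lam : ℝ, 0 < μ → 0 < lam →
      μ * deriv (fun m => D t m lam) μ - 4 * lam * deriv (fun l => D t μ l) lam = 0) :=
  callan_symanzik_two_point_general f hf K D hD
end
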